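/- arXiv:math/0404451 — 4 statements merged into one kernel-verified Lean document; each statement's English description precedes it below -/
import Mathlib

section
/- Let V be a subspace of a vector space W over a field, let α ∈ Λ^p V, and suppose θ₁,…,θ_m ∈ W are linearly independent modulo V (i.e. their images in W/V are linearly independent). Then α ∧ θ₁ ∧ ⋯ ∧ θ_m = 0 in Λ^(p+m) W if and only if α = 0. -/
/-!
Right contraction with a functional `d` that kills `V` and `θ₁, …, θₘ₋₁` and sends `θₘ` to `1`
annihilates `α ∧ θ₁ ∧ ⋯ ∧ θₘ₋₁`, hence sends `α ∧ θ₁ ∧ ⋯ ∧ θₘ` to `α ∧ θ₁ ∧ ⋯ ∧ θₘ₋₁`; induct on `m`.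
Only the Leibniz rule for contraction is used, so the argument works in any Clifford algebra.
-/

open CliffordAlgebra

theorem LinearIndependent.exists_dual_forall_apply_eq {ι K M : Type*} [Field K] [AddCommGroup M]
    [Module K M] {v : ι → M} (hv : LinearIndependent K v) (c : ι → K) :
    ∃ f : Module.Dual K M, ∀ i, f (v i) = c i := by
  obtain ⟨f, hf⟩ := LinearMap.exists_extend (Finsupp.linearCombination K c ∘ₗ hv.repr)
  refine ⟨f, fun i => ?_⟩
  have := congr($hf ⟨v i, Submodule.subset_span ⟨i, rfl⟩⟩)
  simpa [hv.repr_eq_single i] using this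

section Contraction

variable {R M : Type*} [CommRing R] [AddCommGroup M] [Module R M] {Q : QuadraticForm R M}

theorem CliffordAlgebra.contractRight_prod_map_ι_eq_zero (d : Module.Dual R M) (l : List M)
    (h : ∀ v ∈ l, d v = 0) : contractRight (l.map (ι Q)).prod d = 0 := by
  induction l using List.reverseRecOn with
  | nil => exact contractRight_one Q d
  | append_singleton l a ih =>
    simp only [List.mem_append, List.mem_singleton] at h
    rw [List.map_append, List.prod_append, List.map_singleton, List.prod_singleton,
      contractRight_mul_ι, ih fun v hv => h v (.inl hv), h a (.inr rfl), zero_smul, zero_mul,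
      sub_zero]

theorem CliffordAlgebra.contractRight_mul_prod_map_ι_eq_zero {V : Submodule R M} {p : ℕ}
    {x : CliffordAlgebra Q}
    (hx : x ∈ Submodule.span R
      {y | ∃ f : Fin p → M, (∀ i, f i ∈ V) ∧ y = (List.ofFn fun i => ι Q (f i)).prod})
    (d : Module.Dual R M) (hdV : ∀ v ∈ V, d v = 0) (l : List M) (hl : ∀ v ∈ l, d v = 0) :
    contractRight (x * (l.map (ι Q)).prod) d = 0 := by
  suffices Submodule.span R _ ≤
      LinearMap.ker ((contractRight.flip d).comp (LinearMap.mulRight R (l.map (ι Q)).prod)) from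
    this hx
  rw [Submodule.span_le]
  rintro _ ⟨f, hf, rfl⟩
  simp only [SetLike.mem_coe, LinearMap.mem_ker, LinearMap.comp_apply, LinearMap.mulRight_apply,
    LinearMap.flip_apply]
  rw [show (List.ofFn fun i => ι Q (f i)) = (List.ofFn f).map (ι Q) from List.map_ofFn.symm,
    ← List.prod_append, ← List.map_append]
  refine contractRight_prod_map_ι_eq_zero d _ fun v hv => ?_
  rcases List.mem_append.mp hv with hv | hv
  · obtain ⟨i, rfl⟩ := List.mem_ofFn.mp hv
    exact hdV _ (hf i)
  · exact hl v hv

end Contraction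

theorem CliffordAlgebra.eq_zero_of_mul_prod_ι_eq_zero {K W : Type*} [Field K] [AddCommGroup W]
    [Module K W] {Q : QuadraticForm K W} {V : Submodule K W} {p : ℕ} {x : CliffordAlgebra Q}
    (hx : x ∈ Submodule.span K
      {y | ∃ f : Fin p → W, (∀ i, f i ∈ V) ∧ y = (List.ofFn fun i => ι Q (f i)).prod})
    {m : ℕ} (θ : Fin m → W)
    (hθ : LinearIndependent K fun i => Submodule.Quotient.mk (p := V) (θ i))
    (h : x * (List.ofFn fun i => ι Q (θ i)).prod = 0) : x = 0 := by
  induction m with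
  | zero => simpa using h
  | succ n ih =>
    obtain ⟨g, hg⟩ := hθ.exists_dual_forall_apply_eq fun i => if i = Fin.last n then 1 else 0
    set d : Module.Dual K W := g ∘ₗ V.mkQ
    have hdV : ∀ v ∈ V, d v = 0 := fun v hv => by
      simp [d, (Submodule.Quotient.mk_eq_zero V).mpr hv]
    set l := List.ofFn fun i : Fin n => θ i.castSucc
    have hdl : ∀ v ∈ l, d v = 0 := by
      intro v hv
      obtain ⟨i, rfl⟩ := List.mem_ofFn.mp hv
      simpa [d, (Fin.castSucc_lt_last i).ne] using hg i.castSucc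
    have hprod : (List.ofFn fun i => ι Q (θ i)).prod =
        (l.map (ι Q)).prod * ι Q (θ (Fin.last n)) := by
      rw [List.ofFn_succ', List.concat_eq_append, List.prod_append, List.prod_singleton,
        List.map_ofFn]
      rfl
    refine ih (fun i => θ i.castSucc) (hθ.comp _ (Fin.castSucc_injective n)) ?_
    have := congr(contractRight $h d)
    rw [hprod, ← mul_assoc, contractRight_mul_ι,
      contractRight_mul_prod_map_ι_eq_zero hx d hdV l hdl] at this
    simpa [d, hg, l, List.map_ofFn, Function.comp_def] using this

theorem exterior_wedge_indep_mod_eq_zero_iff_general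
    {K W : Type*} [Field K] [AddCommGroup W] [Module K W]
    (V : Submodule K W) (p m : ℕ) (α : ExteriorAlgebra K W)
    (hα : α ∈ Submodule.span K
      {x : ExteriorAlgebra K W | ∃ f : Fin p → W, (∀ i, f i ∈ V) ∧
        x = (List.ofFn fun i => ExteriorAlgebra.ι K (f i)).prod})
    (θ : Fin m → W)
    (hθ : LinearIndependent K fun i => Submodule.Quotient.mk (p := V) (θ i)) :
    α * (List.ofFn fun i => ExteriorAlgebra.ι K (θ i)).prod = 0 ↔ α = 0 := by
  refine ⟨eq_zero_of_mul_prod_ι_eq_zero hα θ hθ, ?_⟩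
  rintro rfl
  exact zero_mul _

/-- If `V ⊆ W` is a subspace, `α ∈ Λ^p V` (viewed inside the exterior
algebra of `W`), and `θ₁,…,θ_m ∈ W` are linearly independent modulo `V`, then
`α ∧ θ₁ ∧ ⋯ ∧ θ_m = 0` iff `α = 0`. -/
theorem exterior_wedge_indep_mod_eq_zero_iff
    {K W : Type*} [Field K] [AddCommGroup W] [Module K W] [FiniteDimensional K W]
    (V : Submodule K W) (p m : ℕ) (α : ExteriorAlgebra K W)
    (hα : α ∈ Submodule.span K
      {x : ExteriorAlgebra K W | ∃ f : Fin p → W, (∀ i, f i ∈ V) ∧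
        x = (List.ofFn fun i => ExteriorAlgebra.ι K (f i)).prod})
    (θ : Fin m → W)
    (hθ : LinearIndependent K fun i => Submodule.Quotient.mk (p := V) (θ i)) :
    α * (List.ofFn fun i => ExteriorAlgebra.ι K (θ i)).prod = 0 ↔ α = 0 :=
  exterior_wedge_indep_mod_eq_zero_iff_general V p m α hα θ hθ
end

section
/- If B is a closed 2-form on a smooth manifold M, then the B-field transformation X+ξ ↦ X + ξ − i_X B preserves the Courant bracket: [X + ξ − i_X B, Y + η − i_Y B] = [X,Y] + (ℒ_X η − ℒ_Y ξ − ½ d(i_X η − i_Y ξ)) − i_{[X,Y]} B. -/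
/- STATEMENT 4: a closed 2-form `B` gives a symmetry of the Courant bracket.
We work in the standard algebraic model of Cartan calculus: functions form a
commutative ℝ-algebra `A` (e.g. `C^∞(M)`), vector fields are the derivations of
`A` (a Lie algebra), 1-forms are `A`-valued functions on vector fields, 2-forms
are skew functions of two vector fields, and `d`, `ℒ`, `i` are given by the usual
Cartan formulas. -/

variable {A : Type*} [CommRing A] [Algebra ℝ A]

/-- Vector fields: derivations of the algebra of functions. -/
local notation "Vect" => Derivation ℝ A A

/-- Lie derivative of a 1-form `ξ` along a vector field `X`:
`(ℒ_X ξ)(Z) = X(ξ(Z)) − ξ([X,Z])`. -/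
noncomputable def lieDer (X : Derivation ℝ A A) (ξ : Derivation ℝ A A → A) :
    Derivation ℝ A A → A :=
  fun Z => X (ξ Z) - ξ ⁅X, Z⁆

/-- The Courant bracket
`[X+ξ, Y+η] = ([X,Y], ℒ_X η − ℒ_Y ξ − ½ d(i_X η − i_Y ξ))`,
where for a function `f` the 1-form `df` is `Z ↦ Z f`. -/
noncomputable def courant (a b : Derivation ℝ A A × (Derivation ℝ A A → A)) :
    Derivation ℝ A A × (Derivation ℝ A A → A) :=
  (⁅a.1, b.1⁆,
    fun Z => lieDer a.1 b.2 Z - lieDer b.1 a.2 Z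
      - (1/2 : ℝ) • (Z (b.2 a.1 - a.2 b.1)))

/-- The B-field transformation `X + ξ ↦ X + ξ − i_X B`. -/
noncomputable def bFieldMap (B : Derivation ℝ A A → Derivation ℝ A A → A)
    (a : Derivation ℝ A A × (Derivation ℝ A A → A)) :
    Derivation ℝ A A × (Derivation ℝ A A → A) :=
  (a.1, fun Z => a.2 Z - B a.1 Z)

/-- if `B` is a skew 2-form with `dB = 0` (where
`dB(X,Y,Z) = X(B(Y,Z)) − Y(B(X,Z)) + Z(B(X,Y)) − B([X,Y],Z) + B([X,Z],Y) − B([Y,Z],X)`),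
then the B-field transformation preserves the Courant bracket:
`[e_B(X+ξ), e_B(Y+η)] = e_B([X+ξ, Y+η])`, i.e.
`[X + ξ − i_X B, Y + η − i_Y B] = [X,Y] + (ℒ_X η − ℒ_Y ξ − ½ d(i_X η − i_Y ξ)) − i_{[X,Y]} B`. -/
theorem bField_preserves_courant
    (B : Derivation ℝ A A → Derivation ℝ A A → A)
    (hskew : ∀ X Y, B X Y = - B Y X)
    (hclosed : ∀ X Y Z : Derivation ℝ A A,
      X (B Y Z) - Y (B X Z) + Z (B X Y)
        - B ⁅X, Y⁆ Z + B ⁅X, Z⁆ Y - B ⁅Y, Z⁆ X = 0) :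
    ∀ a b, courant (bFieldMap B a) (bFieldMap B b) = bFieldMap B (courant a b) := by
  rintro ⟨X, ξ⟩ ⟨Y, η⟩
  refine Prod.ext rfl ?_
  funext Z
  simp only [courant, bFieldMap, lieDer]
  have hc := hclosed X Y Z
  have h1 := hskew Y X
  have h2 := hskew Y ⁅X, Z⁆
  have h3 := hskew X ⁅Y, Z⁆
  rw [h1]
  simp only [map_sub, map_add, map_neg, sub_neg_eq_add, Algebra.smul_def]
  have hcc : algebraMap ℝ A (1/2 : ℝ) + algebraMap ℝ A (1/2 : ℝ) = 1 := by
    rw [← map_add]; norm_num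
  linear_combination -hc + h2 - h3 - Z (B X Y) * hcc
end

section
/- In a finite-dimensional nilpotent Lie algebra g, define the filtration V₀ = 0 and V_i = {v ∈ g* : dv ∈ Λ² V_{i−1}} where d is the Chevalley–Eilenberg differential. Then V_i equals the annihilator of the i-th term g^i of the lower central series (g^0 = g, g^k = [g^{k−1}, g]), and there exists s with V_s = g*. -/
/- STATEMENT 7: in a finite-dimensional nilpotent Lie algebra, the filtration
`V₀ = 0`, `V_i = {v ∈ g* : dv ∈ Λ² V_{i−1}}` of the dual (for the
Chevalley–Eilenberg differential `dξ(X,Y) = −ξ([X,Y])`) coincides with the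
annihilators of the lower central series, and exhausts `g*`. -/

variable {g : Type*} [LieRing g] [LieAlgebra ℝ g]

/-- The Chevalley–Eilenberg differential of a 1-form, as an alternating bilinear
form: `dξ(X,Y) = −ξ([X,Y])`. -/
noncomputable def ceDiff : Module.Dual ℝ g →ₗ[ℝ] (g →ₗ[ℝ] g →ₗ[ℝ] ℝ) where
  toFun v := LinearMap.mk₂ ℝ (fun X Y => - v ⁅X, Y⁆)
    (fun X X' Y => by simp [add_lie]; ring)
    (fun c X Y => by simp [smul_lie])
    (fun X Y Y' => by simp [lie_add]; ring)
    (fun c X Y => by simp [lie_smul])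
  map_add' v w := by ext X Y; simp [LinearMap.mk₂]; ring
  map_smul' c v := by ext X Y; simp [LinearMap.mk₂]

/-- The wedge of two 1-forms, as a bilinear form:
`(u∧w)(X,Y) = u(X)w(Y) − u(Y)w(X)`. -/
noncomputable def wedge1 (u w : Module.Dual ℝ g) : g →ₗ[ℝ] g →ₗ[ℝ] ℝ :=
  LinearMap.mk₂ ℝ (fun X Y => u X * w Y - u Y * w X)
    (fun X X' Y => by simp; ring)
    (fun c X Y => by simp; ring)
    (fun X Y Y' => by simp; ring)
    (fun c X Y => by simp; ring)

/-- `Λ² U`, for a subspace `U ⊆ g*`, viewed inside the space of bilinear forms: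
the span of the wedges of elements of `U`. -/
noncomputable def lambdaTwo (U : Submodule ℝ (Module.Dual ℝ g)) :
    Submodule ℝ (g →ₗ[ℝ] g →ₗ[ℝ] ℝ) :=
  Submodule.span ℝ {B | ∃ u ∈ U, ∃ w ∈ U, B = wedge1 u w}

/-- The filtration `V₀ = 0`, `V_i = {v : dv ∈ Λ² V_{i−1}}` of `g*`. -/
noncomputable def Vfil : ℕ → Submodule ℝ (Module.Dual ℝ g)
  | 0 => ⊥
  | (i + 1) => Submodule.comap ceDiff (lambdaTwo (Vfil i))


/-! A 1-form `v` has `dv ∈ Λ²(W^⊥)` exactly when the skew form `dv` vanishes on `g × W`, because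
in finite dimension every skew form vanishing on `g × W` lies in `Λ²(W^⊥)`; and `dv` vanishes on
`g × W` exactly when `v` kills `[g, W]`. Taking `W = g^i` and inducting on `i` gives
`V_i = (g^i)^⊥`, and nilpotency makes some `g^s` zero, so `V_s = g*`. -/

theorem Submodule.exists_dualAnnihilator_sub_sum_mem {K V : Type*} [Field K] [AddCommGroup V]
    [Module K V] (W : Submodule K V) [FiniteDimensional K (V ⧸ W)] :
    ∃ (n : ℕ) (f : Fin n → Module.Dual K V) (c : Fin n → V),
      (∀ i, f i ∈ W.dualAnnihilator) ∧ ∀ x, x - ∑ i, f i x • c i ∈ W := by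
  let b := Module.finBasis K (V ⧸ W)
  choose c hc using fun i => W.mkQ_surjective (b i)
  refine ⟨_, fun i => (b.coord i).comp W.mkQ, c, fun i => ?_, fun x => ?_⟩
  · rw [Submodule.mem_dualAnnihilator]
    intro w hw
    simp [(Submodule.Quotient.mk_eq_zero W).mpr hw]
  · rw [← Submodule.Quotient.mk_eq_zero, Submodule.Quotient.mk_sub, sub_eq_zero]
    show W.mkQ x = W.mkQ _
    simp only [map_sum, map_smul, hc]
    exact (b.sum_repr _).symm

lemma ceDiff_apply (v : Module.Dual ℝ g) (X Y : g) : ceDiff v X Y = - v ⁅X, Y⁆ := rfl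

lemma wedge1_apply (u w : Module.Dual ℝ g) (X Y : g) :
    wedge1 u w X Y = u X * w Y - u Y * w X := rfl

lemma apply_eq_zero_of_mem_lambdaTwo_dualAnnihilator {W : Submodule ℝ g}
    {B : g →ₗ[ℝ] g →ₗ[ℝ] ℝ} (hB : B ∈ lambdaTwo W.dualAnnihilator) (X : g) {Y : g}
    (hY : Y ∈ W) : B X Y = 0 := by
  induction hB using Submodule.span_induction with
  | mem B hB =>
    obtain ⟨u, hu, w, hw, rfl⟩ := hB
    simp [wedge1_apply, (Submodule.mem_dualAnnihilator u).mp hu Y hY,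
      (Submodule.mem_dualAnnihilator w).mp hw Y hY]
  | zero => rfl
  | add _ _ _ _ h1 h2 => simp [h1, h2]
  | smul c _ _ h => simp [h]

/-- Write `X ≡ ∑ fᵢ(X) cᵢ` modulo `W` with `fᵢ ∈ W^⊥`. Then `B(X, Y) = ∑ fᵢ(X) uᵢ(Y)` with
`uᵢ = B(cᵢ, ·) ∈ W^⊥`, and skew-symmetry gives `B = ½ ∑ fᵢ ∧ uᵢ`. -/
lemma mem_lambdaTwo_dualAnnihilator [FiniteDimensional ℝ g] {W : Submodule ℝ g}
    {B : g →ₗ[ℝ] g →ₗ[ℝ] ℝ} (hskew : ∀ X Y, B X Y = - B Y X)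
    (hW : ∀ X, ∀ Y ∈ W, B X Y = 0) : B ∈ lambdaTwo W.dualAnnihilator := by
  obtain ⟨n, f, c, hf, hc⟩ := W.exists_dualAnnihilator_sub_sum_mem
  have hu : ∀ i, B (c i) ∈ W.dualAnnihilator := fun i =>
    (Submodule.mem_dualAnnihilator _).mpr (hW (c i))
  have hexpand : ∀ X Y, B X Y = ∑ i, f i X * B (c i) Y := fun X Y => by
    have h := hW Y _ (hc X)
    rw [hskew, map_sub, LinearMap.sub_apply, neg_eq_zero, sub_eq_zero] at h
    simp [h, LinearMap.sum_apply]
  have hB : B = (1 / 2 : ℝ) • ∑ i, wedge1 (f i) (B (c i)) := by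
    ext X Y
    simp only [one_div, LinearMap.smul_apply, LinearMap.sum_apply, wedge1_apply,
      Finset.sum_sub_distrib, smul_eq_mul]
    rw [← hexpand X Y, ← hexpand Y X, hskew Y X]
    ring
  rw [hB]
  exact Submodule.smul_mem _ _ (Submodule.sum_mem _ fun i _ =>
    Submodule.subset_span ⟨f i, hf i, B (c i), hu i, rfl⟩)

lemma ceDiff_mem_lambdaTwo_dualAnnihilator_iff [FiniteDimensional ℝ g] {W : Submodule ℝ g}
    {v : Module.Dual ℝ g} :
    ceDiff v ∈ lambdaTwo W.dualAnnihilator ↔ ∀ X : g, ∀ Y ∈ W, v ⁅X, Y⁆ = 0 := by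
  refine ⟨fun h X Y hY => ?_, fun h => mem_lambdaTwo_dualAnnihilator (fun X Y => ?_) ?_⟩
  · simpa [ceDiff_apply] using apply_eq_zero_of_mem_lambdaTwo_dualAnnihilator h X hY
  · rw [ceDiff_apply, ceDiff_apply, ← lie_skew, map_neg]
  · intro X Y hY
    rw [ceDiff_apply, h X Y hY, neg_zero]

lemma LieSubmodule.mem_dualAnnihilator_top_lie_iff {R L M : Type*} [CommRing R] [LieRing L]
    [LieAlgebra R L] [AddCommGroup M] [Module R M] [LieRingModule L M] [LieModule R L M]
    (N : LieSubmodule R L M) (v : Module.Dual R M) :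
    v ∈ (LieSubmodule.toSubmodule ⁅(⊤ : LieIdeal R L), N⁆).dualAnnihilator ↔
      ∀ x : L, ∀ m ∈ N, v ⁅x, m⁆ = 0 := by
  rw [Submodule.mem_dualAnnihilator]
  change _ ≤ LinearMap.ker v ↔ _
  rw [LieSubmodule.lieIdeal_oper_eq_linear_span', Submodule.span_le]
  simp only [Set.ofPred_subset, SetLike.mem_coe, LinearMap.mem_ker, LieSubmodule.mem_top,
    true_and, forall_exists_index, and_imp]
  exact ⟨fun h x m hm => h _ x m hm rfl, fun h _ x m hm hxm => hxm ▸ h x m hm⟩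

/-- `V_i` equals the annihilator of the `i`-th term `g^i` of the lower
central series (`g^0 = g`, `g^k = [g^{k−1}, g]`), and `V_s = g*` for some `s`. -/
theorem Vfil_eq_dualAnnihilator_lowerCentralSeries
    [FiniteDimensional ℝ g] [LieModule.IsNilpotent g g] :
    (∀ i, Vfil (g := g) i =
      (LieSubmodule.toSubmodule (LieModule.lowerCentralSeries ℝ g g i)).dualAnnihilator)
    ∧ ∃ s, Vfil (g := g) s = ⊤ := by
  have hV : ∀ i, Vfil (g := g) i =
      (LieSubmodule.toSubmodule (LieModule.lowerCentralSeries ℝ g g i)).dualAnnihilator := by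
    intro i
    induction i with
    | zero => simp [Vfil]
    | succ i ih =>
      ext v
      rw [Vfil, Submodule.mem_comap, ih, ceDiff_mem_lambdaTwo_dualAnnihilator_iff,
        LieModule.lowerCentralSeries_succ, LieSubmodule.mem_dualAnnihilator_top_lie_iff]
      rfl
  obtain ⟨s, hs⟩ := LieModule.IsNilpotent.nilpotent ℝ g g
  exact ⟨hV, s, by simp [hV s, hs]⟩
end

section
/- Let g be the 6-dimensional nilpotent Lie algebra with dual basis e₁,…,e₆ and differentials (0,0,12,13,23,14), i.e. de₁=de₂=0, de₃=e₁∧e₂, de₄=e₁∧e₃, de₅=e₂∧e₃, de₆=e₁∧e₄. Then there is no closed complex form ρ = exp(B+iω) ∧ θ with θ ∈ g*⊗ℂ a 1-form, B, ω real invariant 2-forms, satisfying ω² ∧ θ ∧ θ̄ ≠ 0. (That is, g admits no left-invariant generalized complex structure of type 1.) -/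
/- STATEMENT 10: the 6-dimensional nilpotent Lie algebra `(0,0,12,13,23,14)` admits
no left-invariant generalized complex structure of type 1: there is no closed form
`ρ = exp(B+iω) ∧ θ` with `θ` a complex 1-form, `B, ω` real 2-forms, and
`ω² ∧ θ ∧ θ̄ ≠ 0`.  Forms are modelled in `Λ•(g*⊗ℂ)` with `g* ⊗ ℂ = Fin 6 → ℂ`;
`d` is determined on the basis by the structure constants and extended as a graded
derivation (hence the explicit formulas for `d` of 1- and 2-forms below). -/

noncomputable section

open ExteriorAlgebra Complex

/-- The basis 1-forms `e₁,…,e₆` (0-indexed). -/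
def e (i : Fin 6) : ExteriorAlgebra ℂ (Fin 6 → ℂ) := ι ℂ (Pi.single i 1)

/-- The values of `d` on the basis: `(0,0,12,13,23,14)`, i.e. `de₁=de₂=0`,
`de₃=e₁∧e₂`, `de₄=e₁∧e₃`, `de₅=e₂∧e₃`, `de₆=e₁∧e₄` (0-indexed below). -/
def D : Fin 6 → ExteriorAlgebra ℂ (Fin 6 → ℂ) :=
  ![0, 0, e 0 * e 1, e 0 * e 2, e 1 * e 2, e 0 * e 3]

/-- The 1-form with coefficients `z`. -/
def oneForm (z : Fin 6 → ℂ) : ExteriorAlgebra ℂ (Fin 6 → ℂ) := ∑ i, z i • e i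

/-- `d` of the 1-form with coefficients `z`. -/
def dOne (z : Fin 6 → ℂ) : ExteriorAlgebra ℂ (Fin 6 → ℂ) := ∑ i, z i • D i

/-- The 2-form `∑ k_{ij} e_i ∧ e_j` with coefficients `k`. -/
def twoForm (k : Fin 6 → Fin 6 → ℂ) : ExteriorAlgebra ℂ (Fin 6 → ℂ) :=
  ∑ i, ∑ j, k i j • (e i * e j)

/-- `d` of the 2-form with coefficients `k` (derivation rule
`d(e_i∧e_j) = de_i∧e_j − e_i∧de_j`). -/
def dTwo (k : Fin 6 → Fin 6 → ℂ) : ExteriorAlgebra ℂ (Fin 6 → ℂ) :=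
  ∑ i, ∑ j, k i j • (D i * e j - e i * D j)

/-! The degree-2 part of `dρ` is `dθ`, and the structure equations force `θ = a e₀ + c e₁`
(indices from 0). The degree-4 part then gives `dφ ∧ θ = 0`. If `c = 0`, then `θ ∧ θ̄ = 0`.
Otherwise the coefficients of `e₀₁₂₃, e₀₁₂₄, e₀₁₂₅, e₀₁₃₄` in `dφ ∧ θ` kill the
`e₃₄, e₄₅, e₂₅, e₃₅`-components of `φ`, hence of `ω = Im φ`. Then `ω ∧ e₀₁` lies in the span
of `e₀₁₂₃` and `e₀₁₂₄`, and `ω² ∧ e₀₁ = 0` because the components `e₄₅, e₃₅` of `ω` that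
would complete these to a 6-form vanish. -/
section Decomposition

variable {ι M σ : Type*} [DecidableEq ι] [AddCommMonoid M] [SetLike σ M] [AddSubmonoidClass σ M]
  (𝒜 : ι → σ) [DirectSum.Decomposition 𝒜]

lemma DirectSum.eq_zero_of_add_add_eq_zero_of_mem {i j k : ι} {a b c : M} (ha : a ∈ 𝒜 i)
    (hb : b ∈ 𝒜 j) (hc : c ∈ 𝒜 k) (hij : i ≠ j) (hik : i ≠ k) (hjk : j ≠ k) (h : a + b + c = 0) :
    a = 0 ∧ b = 0 := by
  constructor
  · simpa [decompose_of_mem_same 𝒜 ha, decompose_of_mem_ne 𝒜 hb hij.symm,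
      decompose_of_mem_ne 𝒜 hc hik.symm] using congrArg (fun x => (decompose 𝒜 x i : M)) h
  · simpa [decompose_of_mem_ne 𝒜 ha hij, decompose_of_mem_same 𝒜 hb,
      decompose_of_mem_ne 𝒜 hc hjk.symm] using congrArg (fun x => (decompose 𝒜 x j : M)) h

end Decomposition

section FormCoeff

variable {R ι : Type*} [CommRing R]

/-- For strictly increasing `s`, the coefficient of `eₛ₍₀₎ ∧ ⋯ ∧ eₛ₍ₙ₋₁₎`, where
`eᵢ = Pi.single i 1`: the determinant pairing with the dual basis. -/
def formCoeff {n : ℕ} (s : Fin n → ι) : ExteriorAlgebra R (ι → R) →ₗ[R] R :=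
  liftAlternating <| Function.update 0 n <|
    Matrix.detRowAlternating.compLinearMap (LinearMap.funLeft R R s)

lemma formCoeff_ιMulti {n : ℕ} (s : Fin n → ι) (v : Fin n → ι → R) :
    formCoeff s (ιMulti R n v) = (Matrix.of fun r c => v r (s c)).det := by
  rw [formCoeff, liftAlternating_apply_ιMulti, Function.update_self]
  rfl

lemma formCoeff_ιMulti_single [LinearOrder ι] {n : ℕ} {s t : Fin n → ι} (hs : StrictMono s)
    (ht : StrictMono t) :
    formCoeff s (ιMulti R n fun r => Pi.single (t r) 1) = if s = t then 1 else 0 := by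
  rw [formCoeff_ιMulti]
  split_ifs with hst
  · subst hst
    convert Matrix.det_one (R := R) (n := Fin n)
    ext r c
    simp [Matrix.one_apply, Pi.single_apply, hs.injective.eq_iff, eq_comm]
  · obtain ⟨r, hr⟩ : ∃ r, t r ∉ Set.range s := by
      by_contra! h
      refine hst ((hs.range_inj ht).mp (Set.eq_of_subset_of_ncard_le
        (Set.range_subset_iff.mpr h) ?_ (Set.finite_range _)).symm)
      rw [Set.ncard_range_of_injective hs.injective, Set.ncard_range_of_injective ht.injective]
    refine Matrix.det_eq_zero_of_row_eq_zero r fun c => ?_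
    exact Pi.single_eq_of_ne (fun h => hr ⟨c, h⟩) _

end FormCoeff

local notation "Λ" => ExteriorAlgebra ℂ (Fin 6 → ℂ)

@[simp]
lemma e_mul_self (i : Fin 6) : e i * e i = 0 := ι_sq_zero _

@[simp]
lemma e_mul_e_mul_self (i : Fin 6) (x : Λ) : e i * (e i * x) = 0 := by
  rw [← mul_assoc, e_mul_self, zero_mul]

lemma e_mul_e_comm (i j : Fin 6) : e i * e j = -(e j * e i) :=
  eq_neg_of_add_eq_zero_left (ι_add_mul_swap _ _)

/- The order hypotheses of the next two lemmas only orient the rewrites, so that `simp` sorts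
products of basis 1-forms. -/

@[simp]
lemma e_mul_e_of_lt {i j : Fin 6} (_ : j < i) : e i * e j = -(e j * e i) := e_mul_e_comm i j

@[simp]
lemma e_mul_e_mul_of_lt {i j : Fin 6} (_ : j < i) (x : Λ) :
    e i * (e j * x) = -(e j * (e i * x)) := by
  rw [← mul_assoc, e_mul_e_comm i j, neg_mul, mul_assoc]

lemma formCoeff_e_mul_e {s : Fin 2 → Fin 6} (hs : StrictMono s) {a b : Fin 6}
    (hab : StrictMono ![a, b]) : formCoeff s (e a * e b) = if s = ![a, b] then 1 else 0 := by
  convert formCoeff_ιMulti_single hs hab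
  simp [ιMulti_apply, Matrix.vecTail, e]

lemma formCoeff_e_mul_e_mul_e_mul_e {s : Fin 4 → Fin 6} (hs : StrictMono s) {a b c d : Fin 6}
    (habcd : StrictMono ![a, b, c, d]) :
    formCoeff s (e a * (e b * (e c * e d))) = if s = ![a, b, c, d] then 1 else 0 := by
  convert formCoeff_ιMulti_single hs habcd
  simp [ιMulti_apply, Matrix.vecTail, e]

local notation "⋀^" n => ⋀[ℂ]^n (Fin 6 → ℂ)

lemma e_mem (i : Fin 6) : e i ∈ ⋀^1 := by
  rw [exteriorPower, pow_one]
  exact LinearMap.mem_range_self _ _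

lemma D_mem (i : Fin 6) : D i ∈ ⋀^2 := by
  fin_cases i
  all_goals first
    | exact zero_mem _
    | exact SetLike.mul_mem_graded (e_mem _) (e_mem _)

lemma oneForm_mem (z : Fin 6 → ℂ) : oneForm z ∈ ⋀^1 :=
  sum_mem fun i _ => Submodule.smul_mem _ _ (e_mem i)

lemma dOne_mem (z : Fin 6 → ℂ) : dOne z ∈ ⋀^2 :=
  sum_mem fun i _ => Submodule.smul_mem _ _ (D_mem i)

lemma twoForm_mem (k : Fin 6 → Fin 6 → ℂ) : twoForm k ∈ ⋀^2 :=
  sum_mem fun i _ => sum_mem fun j _ =>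
    Submodule.smul_mem _ _ (SetLike.mul_mem_graded (e_mem i) (e_mem j))

lemma dTwo_mem (k : Fin 6 → Fin 6 → ℂ) : dTwo k ∈ ⋀^3 :=
  sum_mem fun i _ => sum_mem fun j _ => Submodule.smul_mem _ _ <| sub_mem
    (SetLike.mul_mem_graded (D_mem i) (e_mem j)) (SetLike.mul_mem_graded (e_mem i) (D_mem j))

/-- Closedness of `exp φ ∧ θ`, read off in degrees 2 and 4. -/
lemma dOne_eq_zero_and_dTwo_mul_oneForm_eq_zero {z : Fin 6 → ℂ} {k : Fin 6 → Fin 6 → ℂ}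
    (h : dOne z + dTwo k * oneForm z + twoForm k * dOne z + dTwo k * twoForm k * oneForm z
      + (1 / 2 : ℂ) • (twoForm k * twoForm k * dOne z) = 0) :
    dOne z = 0 ∧ dTwo k * oneForm z = 0 := by
  have hgraded : dOne z + (dTwo k * oneForm z + twoForm k * dOne z)
      + (dTwo k * twoForm k * oneForm z + (1 / 2 : ℂ) • (twoForm k * twoForm k * dOne z)) = 0 := by
    rw [← h]; abel
  have mem2 : dOne z ∈ ⋀^2 := dOne_mem z
  have mem4 : dTwo k * oneForm z + twoForm k * dOne z ∈ ⋀^4 :=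
    add_mem (SetLike.mul_mem_graded (dTwo_mem k) (oneForm_mem z))
      (SetLike.mul_mem_graded (twoForm_mem k) (dOne_mem z))
  have mem6 : dTwo k * twoForm k * oneForm z
      + (1 / 2 : ℂ) • (twoForm k * twoForm k * dOne z) ∈ ⋀^6 :=
    add_mem (SetLike.mul_mem_graded (SetLike.mul_mem_graded (dTwo_mem k) (twoForm_mem k))
      (oneForm_mem z)) (Submodule.smul_mem _ _ (SetLike.mul_mem_graded
        (SetLike.mul_mem_graded (twoForm_mem k) (twoForm_mem k)) (dOne_mem z)))
  obtain ⟨hdθ, hdeg4⟩ := DirectSum.eq_zero_of_add_add_eq_zero_of_mem (fun n => ⋀^n) mem2 mem4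
    mem6 (by decide) (by decide) (by decide) hgraded
  exact ⟨hdθ, by simpa [hdθ] using hdeg4⟩

lemma dOne_eq (z : Fin 6 → ℂ) :
    dOne z = z 2 • (e 0 * e 1) + z 3 • (e 0 * e 2) + z 4 • (e 1 * e 2) + z 5 • (e 0 * e 3) := by
  simp [dOne, D, Fin.sum_univ_six]

lemma dOne_eq_zero_iff {z : Fin 6 → ℂ} : dOne z = 0 ↔ z 2 = 0 ∧ z 3 = 0 ∧ z 4 = 0 ∧ z 5 = 0 := by
  refine ⟨fun h => ?_, fun ⟨h2, h3, h4, h5⟩ => by simp [dOne_eq, h2, h3, h4, h5]⟩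
  have hcoeff (s : Fin 2 → Fin 6) : formCoeff s (dOne z) = 0 := by rw [h, map_zero]
  refine ⟨?_, ?_, ?_, ?_⟩
  · simpa (disch := decide) [dOne_eq, formCoeff_e_mul_e] using hcoeff ![0, 1]
  · simpa (disch := decide) [dOne_eq, formCoeff_e_mul_e] using hcoeff ![0, 2]
  · simpa (disch := decide) [dOne_eq, formCoeff_e_mul_e] using hcoeff ![1, 2]
  · simpa (disch := decide) [dOne_eq, formCoeff_e_mul_e] using hcoeff ![0, 3]

lemma oneForm_eq_of_dOne_eq_zero {z : Fin 6 → ℂ} (h : dOne z = 0) :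
    oneForm z = z 0 • e 0 + z 1 • e 1 := by
  obtain ⟨h2, h3, h4, h5⟩ := dOne_eq_zero_iff.mp h
  simp [oneForm, Fin.sum_univ_six, h2, h3, h4, h5]

lemma smul_e_add_smul_e_mul_smul_e_add_smul_e (a b c d : ℂ) :
    (a • e 0 + b • e 1) * (c • e 0 + d • e 1) = (a * d - b * c) • (e 0 * e 1) := by
  simp [add_mul, mul_add]
  module

lemma dTwo_mul_e_zero (k : Fin 6 → Fin 6 → ℂ) :
    dTwo k * e 0 = (k 3 4 - k 4 3) • (e 0 * (e 1 * (e 2 * e 3)))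
      + (k 5 4 - k 4 5) • (e 0 * (e 1 * (e 2 * e 5))) := by
  simp [dTwo, D, Fin.sum_univ_six, add_mul, sub_mul, mul_assoc]
  module

lemma dTwo_mul_e_one (k : Fin 6 → Fin 6 → ℂ) :
    dTwo k * e 1 = (k 2 5 - k 5 2) • (e 0 * (e 1 * (e 2 * e 3)))
      + (k 3 4 - k 4 3) • (e 0 * (e 1 * (e 2 * e 4)))
      + (k 3 5 - k 5 3) • (e 0 * (e 1 * (e 2 * e 5)))
      + (k 5 4 - k 4 5) • (e 0 * (e 1 * (e 3 * e 4))) := by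
  simp [dTwo, D, Fin.sum_univ_six, add_mul, sub_mul, mul_assoc]
  module

lemma coeff_symm_of_dTwo_mul_eq_zero {k : Fin 6 → Fin 6 → ℂ} {a c : ℂ}
    (h : dTwo k * (a • e 0 + c • e 1) = 0) (hc : c ≠ 0) :
    k 3 4 = k 4 3 ∧ k 5 4 = k 4 5 ∧ k 2 5 = k 5 2 ∧ k 3 5 = k 5 3 := by
  have hcoeff (s : Fin 4 → Fin 6) : formCoeff s (dTwo k * (a • e 0 + c • e 1)) = 0 := by
    rw [h, map_zero]
  have h0123 := hcoeff ![0, 1, 2, 3]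
  have h0124 := hcoeff ![0, 1, 2, 4]
  have h0125 := hcoeff ![0, 1, 2, 5]
  have h0134 := hcoeff ![0, 1, 3, 4]
  simp (disch := decide) [mul_add, dTwo_mul_e_zero, dTwo_mul_e_one,
    formCoeff_e_mul_e_mul_e_mul_e, hc, sub_eq_zero] at h0123 h0124 h0125 h0134
  refine ⟨h0124, h0134, ?_, ?_⟩
  · simpa [h0124, hc, sub_eq_zero] using h0123
  · simpa [h0134, hc, sub_eq_zero] using h0125

lemma twoForm_mul_e_zero_mul_e_one {w : Fin 6 → Fin 6 → ℂ} (h34 : w 3 4 = w 4 3)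
    (h54 : w 5 4 = w 4 5) (h25 : w 2 5 = w 5 2) (h35 : w 3 5 = w 5 3) :
    twoForm w * (e 0 * e 1) = (w 2 3 - w 3 2) • (e 0 * (e 1 * (e 2 * e 3)))
      + (w 2 4 - w 4 2) • (e 0 * (e 1 * (e 2 * e 4))) := by
  simp [twoForm, Fin.sum_univ_six, add_mul, mul_assoc, h34, h54, h25, h35]
  module

lemma twoForm_mul_twoForm_mul_e_zero_mul_e_one {w : Fin 6 → Fin 6 → ℂ} (h34 : w 3 4 = w 4 3)
    (h54 : w 5 4 = w 4 5) (h25 : w 2 5 = w 5 2) (h35 : w 3 5 = w 5 3) :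
    twoForm w * twoForm w * (e 0 * e 1) = 0 := by
  rw [mul_assoc, twoForm_mul_e_zero_mul_e_one h34 h54 h25 h35]
  simp [twoForm, Fin.sum_univ_six, add_mul, mul_add, mul_assoc, h54, h35]

/-- With `φ = B + iω`, `ρ = θ + φ∧θ + ½φ²∧θ` and
`dρ = dθ + dφ∧θ + φ∧dθ + dφ∧φ∧θ + ½φ²∧dθ`. -/
theorem no_type_one_structure_0_0_12_13_23_14 :
    ¬ ∃ (z : Fin 6 → ℂ) (b w : Fin 6 → Fin 6 → ℝ),
      (let θ := oneForm z
       let θbar := oneForm fun i => starRingEnd ℂ (z i)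
       let φ := twoForm fun i j => (b i j : ℂ) + Complex.I * (w i j : ℂ)
       let dφ := dTwo fun i j => (b i j : ℂ) + Complex.I * (w i j : ℂ)
       let ωc := twoForm fun i j => (w i j : ℂ)
       -- closedness of ρ = exp(B+iω) ∧ θ :
       dOne z + dφ * θ + φ * dOne z + dφ * φ * θ + (1/2 : ℂ) • (φ * φ * dOne z) = 0
       -- nondegeneracy ω² ∧ θ ∧ θ̄ ≠ 0 :
       ∧ ωc * ωc * θ * θbar ≠ 0) := by
  rintro ⟨z, b, w, hclosed, hnondeg⟩
  obtain ⟨hdθ, hdφθ⟩ := dOne_eq_zero_and_dTwo_mul_oneForm_eq_zero hclosed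
  have hdθbar : dOne (fun i => starRingEnd ℂ (z i)) = 0 := by
    obtain ⟨h2, h3, h4, h5⟩ := dOne_eq_zero_iff.mp hdθ
    simp [dOne_eq_zero_iff, h2, h3, h4, h5]
  rw [oneForm_eq_of_dOne_eq_zero hdθ] at hdφθ hnondeg
  rw [oneForm_eq_of_dOne_eq_zero hdθbar, mul_assoc, smul_e_add_smul_e_mul_smul_e_add_smul_e,
    mul_smul_comm] at hnondeg
  by_cases hz1 : z 1 = 0
  · simp [hz1] at hnondeg
  have him {i j : Fin 6} (h : (b i j : ℂ) + I * w i j = b j i + I * w j i) :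
      (w i j : ℂ) = w j i := by
    simpa using congrArg Complex.im h
  obtain ⟨h34, h54, h25, h35⟩ := coeff_symm_of_dTwo_mul_eq_zero hdφθ hz1
  rw [twoForm_mul_twoForm_mul_e_zero_mul_e_one (him h34) (him h54) (him h25) (him h35),
    smul_zero] at hnondeg
  exact hnondeg rfl

end
end
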